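/- arXiv:2001.10204 — 2 statements merged into one kernel-verified Lean document; each statement's English description precedes it below -/
import Mathlib

section
/- The exactly-two function ⦗2⦘₃ : Bool³ → Bool (true iff exactly two inputs are true) is realized by the gadget with ≠₃, OR₂ and =₄: for all external inputs a,b,c, the sum over internal edge assignments of the product (≠₃ on one triple) · (OR₂ checks) · (=₄ condition) equals 1 if exactly two of a,b,c are true, and 0 otherwise. -/
/-- 4-ary equality, valued in ℕ. -/
def eq4 (a b c d : Bool) : ℕ := if a = b ∧ b = c ∧ c = d then 1 else 0

/-- Ternary disequality `≠₃` (the symmetric function `[0,1,1,0]`): 1 iff the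
inputs are not all equal. -/
def ne3 (a b c : Bool) : ℕ := if ¬(a = b ∧ b = c) then 1 else 0

/-- Binary OR, valued in ℕ. -/
def or2 (a b : Bool) : ℕ := if a || b then 1 else 0

/-- The gadget of Figure 6(b): each external variable is copied by a 4-ary
equality into one input of a central `≠₃` and into two `OR₂`'s (paired
cyclically with the neighbouring variables).  Its contraction realizes the
exactly-two function `⦗2⦘₃ = [0,0,1,0]`. -/
theorem exactly_two_gadget_correct (a b c : Bool) :
    (∑ a₁ : Bool, ∑ a₂ : Bool, ∑ a₃ : Bool,
     ∑ b₁ : Bool, ∑ b₂ : Bool, ∑ b₃ : Bool,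
     ∑ c₁ : Bool, ∑ c₂ : Bool, ∑ c₃ : Bool,
        eq4 a a₁ a₂ a₃ * eq4 b b₁ b₂ b₃ * eq4 c c₁ c₂ c₃ *
        ne3 a₁ b₁ c₁ *
        or2 a₂ b₃ * or2 b₂ c₃ * or2 c₂ a₃)
      = if a.toNat + b.toNat + c.toNat = 2 then 1 else 0 := by
  cases a <;> cases b <;> cases c <;> decide
end

section
/- The contraction value of the tensor network encoding a CNF formula equals its number of satisfying assignments: for a CNF formula Φ with variables x₁,…,xₙ and clauses C₁,…,Cₘ, the sum over all edge assignments of the product of (equality constraints at variable vertices, disequality between a variable and its negation literal, and OR constraints at clause vertices) equals #SAT(Φ). -/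
/-- Binary OR on a list of edge values (the `OR_d` clause constraint), valued in ℕ. -/
def orList (l : List Bool) : ℕ := if l.any id then 1 else 0

lemma sum_delta {ι : Type*} [Fintype ι] [DecidableEq ι] {κ : ι → Type*} [∀ i, Fintype (κ i)] [∀ i, DecidableEq (κ i)]
    (f : (i : ι) → κ i → Bool) (G : ((i : ι) → κ i → Bool) → ℕ) :
    ∑ e : (i : ι) → κ i → Bool,
      (∏ i, ∏ l, if e i l = f i l then 1 else 0) * G e = G f := by
  rw [Fintype.sum_eq_single f]
  · simp
  · intro e he
    have h : ∃ i l, e i l ≠ f i l := by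
      by_contra h
      push_neg at h
      exact he (funext fun i => funext fun l => h i l)
    obtain ⟨i, l, hil⟩ := h
    have hz : (∏ i, ∏ l, if e i l = f i l then (1 : ℕ) else 0) = 0 := by
      apply Finset.prod_eq_zero (Finset.mem_univ i)
      apply Finset.prod_eq_zero (Finset.mem_univ l)
      simp [hil]
    rw [hz, zero_mul]

lemma sum_neg_delta {ι : Type*} [Fintype ι] [DecidableEq ι] (p : ι → Bool) (H : (ι → Bool) → ℕ) :
    ∑ q : ι → Bool, (∏ i, if p i ≠ q i then 1 else 0) * H q = H (fun i => !p i) := by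
  rw [Fintype.sum_eq_single (fun i => !p i)]
  · simp
  · intro q hq
    have h : ∃ i, q i = p i := by
      by_contra h
      push_neg at h
      apply hq
      funext i
      have hi := h i
      cases hpi : p i <;> cases hqi : q i <;> simp_all
    obtain ⟨i, hi⟩ := h
    have hz : (∏ i, if p i ≠ q i then (1 : ℕ) else 0) = 0 := by
      apply Finset.prod_eq_zero (Finset.mem_univ i)
      simp [hi]
    rw [hz, zero_mul]

/-- The tensor network of a CNF formula `Φ` with `n` variables and `m`
clauses (a clause is a list of literals, a literal being a variable index
together with its sign).

Edge variables of the contraction: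
* `e j l` : the edge between the `l`-th literal vertex of clause `j` and the
  clause vertex `j`;
* `p i` / `q i` : the values carried by the positive / negative literal
  vertex of variable `i` (the equality constraints `=_{a+1}` and `=_{b+1}`
  force all edges at these vertices to carry these common values, which is
  encoded by the indicator `e j l = p i` resp. `= q i`);
* `ne2 (p i) (q i)` : the `≠₂` constraint between the two literal vertices;
* `orList` : the `OR` constraint at each clause vertex.

The contraction value equals the number of satisfying assignments of `Φ`. -/
theorem cnf_tensor_network_counts_sat (n m : ℕ)
    (clauses : Fin m → List (Fin n × Bool)) :
    (∑ p : Fin n → Bool, ∑ q : Fin n → Bool,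
     ∑ e : (j : Fin m) → Fin (clauses j).length → Bool,
        (∏ i : Fin n, if p i ≠ q i then 1 else 0) *
        (∏ j : Fin m, ∏ l : Fin (clauses j).length,
            if e j l = (if ((clauses j).get l).2
                        then p ((clauses j).get l).1
                        else q ((clauses j).get l).1) then 1 else 0) *
        (∏ j : Fin m, orList (List.ofFn (e j))))
      = (Finset.univ.filter (fun x : Fin n → Bool =>
          ∀ j : Fin m, ∃ l : Fin (clauses j).length,
            x ((clauses j).get l).1 = ((clauses j).get l).2)).card := by
  have step1 : ∀ p q : Fin n → Bool,
      (∑ e : (j : Fin m) → Fin (clauses j).length → Bool,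
        (∏ i : Fin n, if p i ≠ q i then 1 else 0) *
        (∏ j : Fin m, ∏ l : Fin (clauses j).length,
            if e j l = (if ((clauses j).get l).2
                        then p ((clauses j).get l).1
                        else q ((clauses j).get l).1) then 1 else 0) *
        (∏ j : Fin m, orList (List.ofFn (e j)))) =
      (∏ i : Fin n, if p i ≠ q i then 1 else 0) *
      (∏ j : Fin m, orList (List.ofFn (fun l =>
          if ((clauses j).get l).2 then p ((clauses j).get l).1
          else q ((clauses j).get l).1))) := by
    intro p q
    calc (∑ e : (j : Fin m) → Fin (clauses j).length → Bool,
        (∏ i : Fin n, if p i ≠ q i then 1 else 0) *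
        (∏ j : Fin m, ∏ l : Fin (clauses j).length,
            if e j l = (if ((clauses j).get l).2
                        then p ((clauses j).get l).1
                        else q ((clauses j).get l).1) then 1 else 0) *
        (∏ j : Fin m, orList (List.ofFn (e j))))
        = (∏ i : Fin n, if p i ≠ q i then 1 else 0) *
          ∑ e : (j : Fin m) → Fin (clauses j).length → Bool,
          (∏ j : Fin m, ∏ l : Fin (clauses j).length,
            if e j l = (if ((clauses j).get l).2
                        then p ((clauses j).get l).1
                        else q ((clauses j).get l).1) then 1 else 0) *
          (∏ j : Fin m, orList (List.ofFn (e j))) := by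
          rw [Finset.mul_sum]
          exact Finset.sum_congr rfl (fun e _ => by ring)
      _ = _ := by
          rw [sum_delta (fun j l => if ((clauses j).get l).2
                        then p ((clauses j).get l).1
                        else q ((clauses j).get l).1)
            (fun e => ∏ j : Fin m, orList (List.ofFn (e j)))]
  simp only [step1]
  have step2 : ∀ p : Fin n → Bool,
      (∑ q : Fin n → Bool,
        (∏ i : Fin n, if p i ≠ q i then 1 else 0) *
        (∏ j : Fin m, orList (List.ofFn (fun l =>
          if ((clauses j).get l).2 then p ((clauses j).get l).1
          else q ((clauses j).get l).1)))) =
      ∏ j : Fin m, orList (List.ofFn (fun l =>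
          if ((clauses j).get l).2 then p ((clauses j).get l).1
          else !p ((clauses j).get l).1)) := by
    intro p
    exact sum_neg_delta p (fun q => ∏ j : Fin m, orList (List.ofFn (fun l =>
          if ((clauses j).get l).2 then p ((clauses j).get l).1
          else q ((clauses j).get l).1)))
  simp only [step2]
  have step3 : ∀ p : Fin n → Bool,
      (∏ j : Fin m, orList (List.ofFn (fun l =>
          if ((clauses j).get l).2 then p ((clauses j).get l).1
          else !p ((clauses j).get l).1))) =
      if (∀ j : Fin m, ∃ l : Fin (clauses j).length,
            p ((clauses j).get l).1 = ((clauses j).get l).2) then 1 else 0 := by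
    clear step1 step2
    intro p
    have h : ∀ j : Fin m, orList (List.ofFn (fun l =>
          if ((clauses j).get l).2 then p ((clauses j).get l).1
          else !p ((clauses j).get l).1)) =
        if (∃ l : Fin (clauses j).length,
            p ((clauses j).get l).1 = ((clauses j).get l).2) then 1 else 0 := by
      intro j
      have hiff : ((List.ofFn (fun l =>
          if ((clauses j).get l).2 then p ((clauses j).get l).1
          else !p ((clauses j).get l).1)).any id = true) ↔
          (∃ l : Fin (clauses j).length,
            p ((clauses j).get l).1 = ((clauses j).get l).2) := by
        simp only [List.any_eq_true, List.mem_ofFn, id_eq, Set.mem_range]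
        constructor
        · rintro ⟨b, ⟨l, hl⟩, hb⟩
          refine ⟨l, ?_⟩
          cases hsign : ((clauses j).get l).2 <;> simp_all
        · rintro ⟨l, hl⟩
          refine ⟨_, ⟨l, rfl⟩, ?_⟩
          rw [hl]
          cases hsign : ((clauses j).get l).2 <;> simp [hsign]
      unfold orList
      simp only [hiff]
    simp only [h]
    rw [Finset.prod_boole]
    simp only [Finset.mem_univ, forall_true_left]
  simp only [step3]
  rw [Finset.card_filter]
end
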